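/- Let a < b and let W, F : [a,b]² → ℝ be continuous with W ≥ 0, and suppose W attains a strict maximum over the square D = [a,b]² at a point z₀ in the interior of D. Suppose X : D → ℝ² is a continuous vector field with X₁ > 0 and X₂ > 0 on the interior of D, and W is C¹ with X·∇W + W − F = 0 on D, where F ≤ W on D. Then a contradiction follows; i.e., no such configuration exists. -/

import Mathlib

/-!
Since `X·∇W = F - W ≤ 0`, `W` cannot decrease along the backward flow of `X`, which is
incompatible with a strict maximum. Without solving the flow, this is seen by tilting: as
`X₁ > 0`, the function `W - ε z₁` strictly decreases along `X`, while for small `ε > 0` it still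
has an interior local maximum near `z₀`, where its derivative would have to vanish.
-/

open Set Metric

section StrictMax

variable {α : Type*} [MetricSpace α] [ProperSpace α]

theorem exists_mem_ball_isLocalMax {f : α → ℝ} {c y : α} {r : ℝ}
    (hf : ContinuousOn f (closedBall c r)) (hy : y ∈ closedBall c r)
    (hsphere : ∀ z ∈ sphere c r, f z < f y) :
    ∃ x ∈ ball c r, IsLocalMax f x := by
  obtain ⟨x, hx, hmax⟩ := (isCompact_closedBall c r).exists_isMaxOn ⟨y, hy⟩ hf
  have hx_ball : x ∈ ball c r := by
    rw [← closedBall_sdiff_sphere]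
    exact ⟨hx, fun hxs => (hsphere x hxs).not_ge (hmax hy)⟩
  exact ⟨x, hx_ball, hmax.isLocalMax (closedBall_mem_nhds_of_mem hx_ball)⟩

theorem exists_pos_add_mul_lt_on_sphere {f g : α → ℝ} {c : α} {r : ℝ} (hr : 0 < r)
    (hf : ContinuousOn f (closedBall c r)) (hg : ContinuousOn g (sphere c r))
    (hmax : ∀ z ∈ closedBall c r, z ≠ c → f z < f c) :
    ∃ ε > 0, ∀ z ∈ sphere c r, f z + ε * g z < f c + ε * g c := by
  obtain ⟨gap, hgap, hgap_le⟩ := (isCompact_sphere c r).exists_forall_le'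
    (f := fun z => f c - f z) (a := 0) (continuousOn_const.sub (hf.mono sphere_subset_closedBall))
    fun z hz => sub_pos.2 (hmax z (sphere_subset_closedBall hz) (ne_of_mem_sphere hz hr.ne'))
  obtain ⟨C, hC⟩ := (isCompact_sphere c r).exists_bound_of_continuousOn
    (f := fun z => g z - g c) (hg.sub continuousOn_const)
  refine ⟨gap / (|C| + 1), by positivity, fun z hz => ?_⟩
  have hfz : f z ≤ f c - gap := by linarith [hgap_le z hz]
  have hgz : g z - g c ≤ |C| :=
    (le_abs_self _).trans ((Real.norm_eq_abs _ ▸ hC z hz).trans (le_abs_self C))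
  have hε : gap / (|C| + 1) * (g z - g c) < gap := by
    calc gap / (|C| + 1) * (g z - g c) ≤ gap / (|C| + 1) * |C| := by gcongr
      _ < gap / (|C| + 1) * (|C| + 1) := by gcongr; linarith
      _ = gap := div_mul_cancel₀ _ (by positivity)
  linarith

end StrictMax

section Tilting

variable {E : Type*} [NormedAddCommGroup E] [NormedSpace ℝ E] [ProperSpace E]

theorem exists_mem_ball_fderiv_apply_pos {W : E → ℝ} {X : E → E} (ℓ : E →L[ℝ] ℝ) {c : E}
    {r : ℝ} (hr : 0 < r) (hWc : ContinuousOn W (closedBall c r))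
    (hWd : ∀ z ∈ ball c r, DifferentiableAt ℝ W z)
    (hmax : ∀ z ∈ closedBall c r, z ≠ c → W z < W c)
    (hX : ∀ z ∈ ball c r, 0 < ℓ (X z)) :
    ∃ z ∈ ball c r, 0 < fderiv ℝ W z (X z) := by
  obtain ⟨ε, hε, hsphere⟩ := exists_pos_add_mul_lt_on_sphere (g := fun z => -ℓ z) hr hWc
    ℓ.continuous.neg.continuousOn hmax
  obtain ⟨z, hz, hloc⟩ := exists_mem_ball_isLocalMax
    (hWc.add (continuousOn_const.mul ℓ.continuous.neg.continuousOn))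
    (mem_closedBall_self hr.le) hsphere
  have hderiv := hloc.hasFDerivAt_eq_zero
    ((hWd z hz).hasFDerivAt.add (ℓ.hasFDerivAt.neg.const_mul ε))
  have h_apply := DFunLike.congr_fun hderiv (X z)
  simp only [add_apply, smul_apply, neg_apply, zero_apply, smul_eq_mul] at h_apply
  exact ⟨z, hz, by linarith [mul_pos hε (hX z hz)]⟩

end Tilting

theorem stmt_11_general
    (a b : ℝ)
    (W F : ℝ × ℝ → ℝ) (X : ℝ × ℝ → ℝ × ℝ)
    (hW_C1 : ContDiff ℝ 1 W)
    -- strict maximum at an interior point z₀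
    (z₀ : ℝ × ℝ) (hz₀ : z₀ ∈ Ioo a b ×ˢ Ioo a b)
    (hmax : ∀ z ∈ Icc a b ×ˢ Icc a b, z ≠ z₀ → W z < W z₀)
    -- both components of X positive in the interior
    (hX1 : ∀ z ∈ Ioo a b ×ˢ Ioo a b, 0 < (X z).1)
    -- the equation `X·∇W + W − F = 0` on D
    (heq : ∀ z ∈ Icc a b ×ˢ Icc a b, fderiv ℝ W z (X z) + W z - F z = 0)
    -- `F ≤ W` on D
    (hFW : ∀ z ∈ Icc a b ×ˢ Icc a b, F z ≤ W z) :
    False := by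
  obtain ⟨r, hr, hball⟩ :=
    nhds_basis_closedBall.mem_iff.1 ((isOpen_Ioo.prod isOpen_Ioo).mem_nhds hz₀)
  have hD : closedBall z₀ r ⊆ Icc a b ×ˢ Icc a b :=
    hball.trans (prod_mono Ioo_subset_Icc_self Ioo_subset_Icc_self)
  obtain ⟨z, hz, hpos⟩ := exists_mem_ball_fderiv_apply_pos (ContinuousLinearMap.fst ℝ ℝ ℝ) hr
    hW_C1.continuous.continuousOn (fun z _ => hW_C1.differentiable one_ne_zero z)
    (fun z hz => hmax z (hD hz)) (fun z hz => hX1 z (hball (ball_subset_closedBall hz)))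
  have hzD := hD (ball_subset_closedBall hz)
  linarith [heq z hzD, hFW z hzD]

/-- No strict interior maximum: if `W ≥ 0` is `C¹` on the square `D = [a,b]²`, attains a
strict maximum over `D` at an interior point, and satisfies `X·∇W + W − F = 0` on `D`,
where `X` is continuous with both components positive in the interior and `F ≤ W` on `D`,
then a contradiction follows. -/
theorem stmt_11
    (a b : ℝ) (hab : a < b)
    (W F : ℝ × ℝ → ℝ) (X : ℝ × ℝ → ℝ × ℝ)
    (hW_C1 : ContDiff ℝ 1 W)
    (hF_cont : ContinuousOn F (Icc a b ×ˢ Icc a b))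
    (hX_cont : ContinuousOn X (Icc a b ×ˢ Icc a b))
    (hW_nonneg : ∀ z ∈ Icc a b ×ˢ Icc a b, 0 ≤ W z)
    -- strict maximum at an interior point z₀
    (z₀ : ℝ × ℝ) (hz₀ : z₀ ∈ Ioo a b ×ˢ Ioo a b)
    (hmax : ∀ z ∈ Icc a b ×ˢ Icc a b, z ≠ z₀ → W z < W z₀)
    -- both components of X positive in the interior
    (hX1 : ∀ z ∈ Ioo a b ×ˢ Ioo a b, 0 < (X z).1)
    (hX2 : ∀ z ∈ Ioo a b ×ˢ Ioo a b, 0 < (X z).2)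
    -- the equation `X·∇W + W − F = 0` on D
    (heq : ∀ z ∈ Icc a b ×ˢ Icc a b, fderiv ℝ W z (X z) + W z - F z = 0)
    -- `F ≤ W` on D
    (hFW : ∀ z ∈ Icc a b ×ˢ Icc a b, F z ≤ W z) :
    False :=
  stmt_11_general a b W F X hW_C1 z₀ hz₀ hmax hX1 heq hFW
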